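/- If a polynomial family is the image of a connected parameter set under a continuous map into polynomials of fixed degree m (no degree dropping), and some member of the family is Hurwitz stable while some other member has a root with nonnegative real part, then some member of the family has a root on the imaginary axis (boundary crossing / zero exclusion principle for degree-invariant families). -/

import Mathlib

/-!
Suppose no member of the family has a root on the imaginary axis. Then the parameter set splits
into the members that are Hurwitz stable and the members with a root in the open right half-plane,
and both parts are open. A root `z` with `0 < z.re` persists nearby because every factor of
`eval z = lc * ∏ (z - r)` over the roots `r` has norm at least `z.re` once all `r` lie in the closed
left half-plane, while `eval z` stays small. Stability persists because the degree does not drop,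
so Cauchy's bound keeps the roots of nearby members in a fixed disc, on which their values are
uniformly close. Connectedness forbids such a splitting.
-/

open Polynomial Filter Topology Finset

namespace Polynomial

variable {K : Type*} [NormedDivisionRing K]

theorem norm_eval_le_sum_norm_coeff_mul_pow {p : K[X]} {m : ℕ} (hp : p.natDegree ≤ m) {z : K}
    {B : ℝ} (hz : ‖z‖ ≤ B) : ‖p.eval z‖ ≤ ∑ j ∈ range (m + 1), ‖p.coeff j‖ * B ^ j := by
  rw [eval_eq_sum_range' (Nat.lt_succ_of_le hp)]
  refine (norm_sum_le _ _).trans (sum_le_sum fun j _ => ?_)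
  rw [norm_mul, norm_pow]
  gcongr

theorem IsRoot.norm_lt_sum_norm_coeff_div_add_one {p : K[X]} (hp : p ≠ 0) {a : K}
    (h : p.IsRoot a) :
    ‖a‖ < (∑ i ∈ range p.natDegree, ‖p.coeff i‖) / ‖p.leadingCoeff‖ + 1 := by
  have hbound :
      cauchyBound p ≤ (∑ i ∈ range p.natDegree, ‖p.coeff i‖₊) / ‖p.leadingCoeff‖₊ + 1 := by
    unfold cauchyBound
    gcongr
    exact Finset.sup_le fun i hi => single_le_sum (f := (‖p.coeff ·‖₊)) (fun _ _ => zero_le) hi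
  have := (NNReal.coe_lt_coe.2 (h.norm_lt_cauchyBound hp)).trans_le (NNReal.coe_le_coe.2 hbound)
  simpa using this

theorem Splits.norm_leadingCoeff_mul_prod_le_norm_eval {F : Type*} [NormedField F]
    {p : F[X]} (hp : p.Splits) (z : F) (f : F → ℝ) (hf₀ : ∀ r ∈ p.roots, 0 ≤ f r)
    (hf : ∀ r ∈ p.roots, f r ≤ ‖z - r‖) :
    ‖p.leadingCoeff‖ * (p.roots.map f).prod ≤ ‖p.eval z‖ := by
  have hnorm := map_multiset_prod (normHom : F →*₀ ℝ) (p.roots.map (z - ·))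
  rw [hp.eval_eq_prod_roots, norm_mul]
  simp only [normHom_apply, Multiset.map_map] at hnorm
  rw [hnorm]
  gcongr
  exact Multiset.prod_map_le_prod_map₀ _ _ hf₀ hf

end Polynomial

section Family

variable {T : Type*} [TopologicalSpace T] {q : T → ℂ[X]} {m : ℕ}

theorem continuous_eval_of_natDegree_le (hq : ∀ j, Continuous fun t => (q t).coeff j)
    (hdeg : ∀ t, (q t).natDegree ≤ m) (z : ℂ) : Continuous fun t => (q t).eval z := by
  simp only [eval_eq_sum_range' (Nat.lt_succ_of_le (hdeg _))]
  fun_prop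

theorem eventually_norm_eval_sub_eval_lt (hq : ∀ j, Continuous fun t => (q t).coeff j)
    (hdeg : ∀ t, (q t).natDegree ≤ m) (x : T) (B : ℝ) {ε : ℝ} (hε : 0 < ε) :
    ∀ᶠ t in 𝓝 x, ∀ z : ℂ, ‖z‖ ≤ B → ‖(q t).eval z - (q x).eval z‖ < ε := by
  set g : T → ℝ := fun t => ∑ j ∈ range (m + 1), ‖(q t).coeff j - (q x).coeff j‖ * B ^ j
  have hg : Tendsto g (𝓝 x) (𝓝 0) := by
    have : Continuous g := by fun_prop
    simpa [g] using this.tendsto x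
  filter_upwards [hg.eventually_lt_const hε] with t ht z hz
  have hsub : (q t - q x).natDegree ≤ m := (natDegree_sub_le _ _).trans (max_le (hdeg t) (hdeg x))
  calc ‖(q t).eval z - (q x).eval z‖ = ‖(q t - q x).eval z‖ := by rw [eval_sub]
    _ ≤ g t := by simpa only [coeff_sub] using norm_eval_le_sum_norm_coeff_mul_pow hsub hz
    _ < ε := ht

theorem eventually_forall_isRoot_norm_le (hq : ∀ j, Continuous fun t => (q t).coeff j)
    (hdeg : ∀ t, (q t).degree = m) (x : T) :
    ∃ B, ∀ᶠ t in 𝓝 x, ∀ z : ℂ, (q t).IsRoot z → ‖z‖ ≤ B := by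
  have hne : ∀ t, q t ≠ 0 := fun t h => by simpa [h] using hdeg t
  have hnat : ∀ t, (q t).natDegree = m := fun t => natDegree_eq_of_degree_eq_some (hdeg t)
  set R : T → ℝ := fun t => (∑ i ∈ range m, ‖(q t).coeff i‖) / ‖(q t).coeff m‖ + 1
  have hR : ContinuousAt R x := by
    have : ‖(q x).coeff m‖ ≠ 0 := by
      rw [norm_ne_zero_iff, ← hnat x, coeff_natDegree, leadingCoeff_ne_zero]; exact hne x
    exact (((continuous_finsetSum _ fun i _ => (hq i).norm).continuousAt).div
      (hq m).norm.continuousAt this).add continuousAt_const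
  refine ⟨R x + 1, ?_⟩
  filter_upwards [hR.eventually_lt continuousAt_const (lt_add_one _)] with t ht z hz
  have := hz.norm_lt_sum_norm_coeff_div_add_one (hne t)
  rw [leadingCoeff, hnat t] at this
  exact (this.trans ht).le

theorem isOpen_setOf_forall_isRoot_re_neg (hq : ∀ j, Continuous fun t => (q t).coeff j)
    (hdeg : ∀ t, (q t).degree = m) : IsOpen {t | ∀ z : ℂ, (q t).IsRoot z → z.re < 0} := by
  refine isOpen_iff_mem_nhds.2 fun x hx => ?_
  have hne : q x ≠ 0 := fun h => by simpa [h] using hdeg x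
  have hroots : ∀ r ∈ (q x).roots, r.re < 0 := fun r hr => hx r ((mem_roots hne).1 hr)
  -- On the closed right half-plane each factor `‖z - r‖` of `(q x).eval z` is at least `-r.re`.
  set c := ‖(q x).leadingCoeff‖ * ((q x).roots.map fun r => -r.re).prod
  have hc : 0 < c := mul_pos (norm_pos_iff.2 (leadingCoeff_ne_zero.2 hne))
    (Multiset.prod_pos fun a ha => by
      obtain ⟨r, hr, rfl⟩ := Multiset.mem_map.1 ha
      linarith [hroots r hr])
  have hnat : ∀ t, (q t).natDegree ≤ m := fun t => (natDegree_eq_of_degree_eq_some (hdeg t)).le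
  obtain ⟨B, hB⟩ := eventually_forall_isRoot_norm_le hq hdeg x
  filter_upwards [hB, eventually_norm_eval_sub_eval_lt hq hnat x B hc] with t hBt hct z hz
  by_contra! hre
  have hlower : c ≤ ‖(q x).eval z‖ :=
    (IsAlgClosed.splits _).norm_leadingCoeff_mul_prod_le_norm_eval z _
      (fun r hr => by linarith [hroots r hr]) fun r _ => by
        linarith [Complex.re_le_norm (z - r), Complex.sub_re z r]
  have hupper := hct z (hBt z hz)
  rw [hz.eq_zero, zero_sub, norm_neg] at hupper
  linarith

theorem isOpen_setOf_exists_isRoot_re_pos (hq : ∀ j, Continuous fun t => (q t).coeff j)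
    (hdeg : ∀ t, (q t).degree = m) : IsOpen {t | ∃ z : ℂ, (q t).IsRoot z ∧ 0 < z.re} := by
  refine isOpen_iff_mem_nhds.2 fun x ⟨z, hz, hre⟩ => ?_
  have hne : ∀ t, q t ≠ 0 := fun t h => by simpa [h] using hdeg t
  have hnat : ∀ t, (q t).natDegree = m := fun t => natDegree_eq_of_degree_eq_some (hdeg t)
  have hlc : ∀ t, (q t).leadingCoeff = (q t).coeff m := fun t => by rw [leadingCoeff, hnat t]
  have hsmall : ∀ᶠ t in 𝓝 x, ‖(q t).eval z‖ < ‖(q t).coeff m‖ * z.re ^ m := by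
    have heval := continuous_eval_of_natDegree_le hq (fun t => (hnat t).le) z
    refine heval.norm.continuousAt.eventually_lt ((hq m).norm.mul continuous_const).continuousAt ?_
    rw [hz.eq_zero, norm_zero, ← hlc]
    exact mul_pos (norm_pos_iff.2 (leadingCoeff_ne_zero.2 (hne x))) (pow_pos hre m)
  filter_upwards [hsmall] with t ht
  by_contra! hroots
  have hlower := (IsAlgClosed.splits (q t)).norm_leadingCoeff_mul_prod_le_norm_eval z
    (fun _ => z.re) (fun _ _ => hre.le) fun r hr => by
      linarith [Complex.re_le_norm (z - r), Complex.sub_re z r, hroots r ((mem_roots (hne t)).1 hr)]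
  rw [Multiset.map_const', Multiset.prod_replicate, IsAlgClosed.card_roots_eq_natDegree, hnat t,
    hlc] at hlower
  exact hlower.not_gt ht

theorem exists_isRoot_re_eq_zero [PreconnectedSpace T]
    (hq : ∀ j, Continuous fun t => (q t).coeff j) (hdeg : ∀ t, (q t).degree = m) {t₀ t₁ : T}
    (h₀ : ∀ z : ℂ, (q t₀).IsRoot z → z.re < 0)
    (h₁ : ∃ z : ℂ, 0 ≤ z.re ∧ (q t₁).IsRoot z) : ∃ t, ∃ z : ℂ, (q t).IsRoot z ∧ z.re = 0 := by
  by_contra! hno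
  have hcover : Set.univ ⊆ {t | ∀ z : ℂ, (q t).IsRoot z → z.re < 0} ∪
      {t | ∃ z : ℂ, (q t).IsRoot z ∧ 0 < z.re} := fun t _ => by
    by_cases hs : ∀ z : ℂ, (q t).IsRoot z → z.re < 0
    · exact Or.inl hs
    · push Not at hs
      obtain ⟨z, hz, hre⟩ := hs
      exact Or.inr ⟨z, hz, hre.lt_of_ne' (hno t z hz)⟩
  obtain ⟨z₁, hre₁, hz₁⟩ := h₁
  obtain ⟨t, -, hstable, z, hz, hre⟩ := isPreconnected_univ _ _
    (isOpen_setOf_forall_isRoot_re_neg hq hdeg) (isOpen_setOf_exists_isRoot_re_pos hq hdeg) hcover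
    ⟨t₀, trivial, h₀⟩ ⟨t₁, trivial, z₁, hz₁, hre₁.lt_of_ne' (hno t₁ z₁ hz₁)⟩
  exact (hstable z hz).not_gt hre

end Family

/-- Boundary crossing / zero exclusion principle: for a coefficient-wise
continuous family of real polynomials of fixed degree `m` over a connected
parameter set, if one member is Hurwitz stable and another member has a root
with nonnegative real part, then some member has a purely imaginary root. -/
theorem boundary_crossing (d m : ℕ) (K : Set (Fin d → ℝ)) (hK : IsConnected K)
    (p : (Fin d → ℝ) → ℝ[X])
    (hcont : ∀ j : ℕ, ContinuousOn (fun k => (p k).coeff j) K)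
    (hdeg : ∀ k ∈ K, (p k).degree = (m : ℕ))
    (k₀ k₁ : Fin d → ℝ) (hk₀ : k₀ ∈ K) (hk₁ : k₁ ∈ K)
    (hstable : ∀ z : ℂ, ((p k₀).map (algebraMap ℝ ℂ)).IsRoot z → z.re < 0)
    (hunstable : ∃ z : ℂ, 0 ≤ z.re ∧ ((p k₁).map (algebraMap ℝ ℂ)).IsRoot z) :
    ∃ k ∈ K, ∃ ω : ℝ, ((p k).map (algebraMap ℝ ℂ)).IsRoot (Complex.I * ω) := by
  have : PreconnectedSpace K := Subtype.preconnectedSpace hK.isPreconnected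
  obtain ⟨⟨k, hk⟩, z, hz, hre⟩ := exists_isRoot_re_eq_zero
    (q := fun k : K => (p k).map (algebraMap ℝ ℂ))
    (fun j => by simp only [coeff_map]; exact Complex.continuous_ofReal.comp (hcont j).domRestrict)
    (fun k => by rw [degree_map]; exact hdeg k k.2) (t₀ := ⟨k₀, hk₀⟩) (t₁ := ⟨k₁, hk₁⟩)
    hstable hunstable
  refine ⟨k, hk, z.im, ?_⟩
  convert hz using 1
  apply Complex.ext <;> simp [hre]
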